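/- arXiv:math/0702214 — 3 statements merged into one kernel-verified Lean document; each statement's English description precedes it below -/
import Mathlib

section
/- Let k ≥ 1, set K = 2^k − 1 and δ = π/(16K + 2). Let x₀, …, x_k ∈ ℂ be k+1 pairwise distinct points, and for a subset I ⊆ {0, …, k} put S_I = Σ_{j∈I} 1/∏_{l≠j}(x_j − x_l). Then there exists an integer ℓ with |ℓ| ≤ 2K − 1 such that the angle θ := πℓ/(8K+1) lies in (−π/4, π/4) and, for every nonempty proper subset I ⊊ {0, …, k}, |Re(e^{iθ}·S_I)| ≥ sin(δ)·|S_I| (equivalently, e^{iθ}·S_I stays at angular distance at least δ from the imaginary axis whenever S_I ≠ 0). -/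
/-!
A number `w ≠ 0` spoils the angle `θ` exactly when `θ + arg w` lies within `δ` of `π/2` modulo
`π`, an open arc of length `2δ = π / M` (with `M = 8K + 1`). The grid angles `πℓ / M` are
`π / M` apart, so among any fewer than `M` consecutive indices each `S_I` spoils at most one.
There are `2K` nonempty proper subsets `I` but `4K - 1` indices `|ℓ| ≤ 2K - 1`, so some index
is spoiled by none of them.
-/

open Real Finset

theorem exists_int_abs_sub_mul_pi_lt_of_abs_sin_lt {y δ : ℝ} (hδ₀ : 0 ≤ δ) (hδ : δ ≤ π / 2)
    (h : |sin y| < sin δ) : ∃ n : ℤ, |y - n * π| < δ := by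
  set n : ℤ := round (y / π)
  refine ⟨n, ?_⟩
  have hr : |y - n * π| ≤ π / 2 := by
    have h := mul_le_mul_of_nonneg_right (abs_sub_round (y / π)) pi_pos.le
    rwa [← abs_of_pos pi_pos, ← abs_mul, abs_of_pos pi_pos, sub_mul,
      div_mul_cancel₀ _ pi_ne_zero, one_div_mul_eq_div] at h
  have hsin : |sin y| = sin |y - n * π| := by
    rw [← abs_sin_eq_sin_abs_of_abs_le_pi (by linarith [pi_pos]), sin_sub_int_mul_pi, abs_mul,
      abs_zpow, abs_neg, abs_one, one_zpow, one_mul]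
  by_contra! hle
  exact (hsin ▸ h).not_ge (sin_le_sin_of_le_of_le_pi_div_two (by linarith) hr hle)

theorem eq_of_abs_sin_lt_of_abs_sin_lt {M : ℕ} (hM : 0 < M) (y : ℝ) {a b : ℤ}
    (hab : |a - b| < M)
    (ha : |sin (π * a / M + y)| < sin (π / (2 * M)))
    (hb : |sin (π * b / M + y)| < sin (π / (2 * M))) : a = b := by
  have hMR : (1 : ℝ) ≤ M := by exact_mod_cast hM
  have hδ₀ : 0 ≤ π / (2 * M) := by positivity
  have hδ : π / (2 * M) ≤ π / 2 := div_le_div_of_nonneg_left pi_pos.le two_pos (by linarith)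
  obtain ⟨n, hn⟩ := exists_int_abs_sub_mul_pi_lt_of_abs_sin_lt hδ₀ hδ ha
  obtain ⟨m, hm⟩ := exists_int_abs_sub_mul_pi_lt_of_abs_sin_lt hδ₀ hδ hb
  -- both angles lie within `π / (2M)` of multiples of `π`, so `a - b` is near `(n - m) M`
  have hnear : |((a - b - (n - m) * M : ℤ) : ℝ)| < 1 := by
    have key : π / M * ((a - b - (n - m) * M : ℤ) : ℝ)
        = (π * a / M + y - n * π) - (π * b / M + y - m * π) := by
      push_cast; field_simp; ring
    have := (abs_sub _ _).trans_lt (add_lt_add hn hm)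
    rw [← key, abs_mul, abs_of_pos (by positivity), ← add_div, ← two_mul,
      mul_div_mul_left _ _ two_ne_zero] at this
    exact (mul_lt_iff_lt_one_right (by positivity)).mp this
  have hmul : a - b = (n - m) * M := by
    have := Int.abs_lt_one_iff.mp (by exact_mod_cast hnear)
    linarith
  rcases eq_or_ne n m with rfl | hnm
  · simpa [sub_eq_zero] using hmul
  · have : (M : ℤ) ≤ |a - b| := by
      rw [hmul, abs_mul, Nat.abs_cast]
      exact le_mul_of_one_le_left (by positivity) (Int.one_le_abs (sub_ne_zero.mpr hnm))
    exact absurd hab this.not_gt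

theorem Finset.exists_mem_forall_notMem_of_sum_card_lt {ι α : Type*} (P : Finset ι)
    (L : Finset α) (B : ι → Finset α) (h : ∑ i ∈ P, #(B i) < #L) :
    ∃ a ∈ L, ∀ i ∈ P, a ∉ B i := by
  classical
  by_contra! hcover
  have : L ⊆ P.biUnion B := fun a ha => mem_biUnion.mpr (hcover a ha)
  exact (card_le_card this |>.trans card_biUnion_le).not_gt h

theorem Finset.card_sdiff_empty_univ {α : Type*} [Fintype α] [DecidableEq α] [Nonempty α] :
    #((univ : Finset (Finset α)) \ {∅, univ}) = 2 ^ Fintype.card α - 2 := by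
  rw [card_sdiff_of_subset (subset_univ _), card_univ, Fintype.card_finset,
    card_pair univ_nonempty.ne_empty.symm]

namespace Complex

theorem re_exp_I_mul (θ : ℝ) (w : ℂ) :
    (exp (I * θ) * w).re = ‖w‖ * Real.cos (θ + arg w) := by
  rw [Real.cos_add, mul_sub, ← mul_assoc, ← mul_assoc, mul_comm ‖w‖, mul_comm ‖w‖, mul_assoc,
    mul_assoc, norm_mul_cos_arg, norm_mul_sin_arg, mul_comm I, exp_mul_I]
  simp [cos_ofReal_re, sin_ofReal_re]

theorem eq_of_abs_re_exp_mul_lt {M : ℕ} (hM : 0 < M) (w : ℂ) {a b : ℤ}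
    (hab : |a - b| < M)
    (ha : |(exp (I * ((π * a / M : ℝ) : ℂ)) * w).re| < Real.sin (π / (2 * M)) * ‖w‖)
    (hb : |(exp (I * ((π * b / M : ℝ) : ℂ)) * w).re| < Real.sin (π / (2 * M)) * ‖w‖) :
    a = b := by
  have hsin (c : ℤ)
      (hc : |(exp (I * ((π * c / M : ℝ) : ℂ)) * w).re| < Real.sin (π / (2 * M)) * ‖w‖) :
      |Real.sin (π * c / M + (arg w + π / 2))| < Real.sin (π / (2 * M)) := by
    rw [re_exp_I_mul, abs_mul, abs_norm, mul_comm _ ‖w‖] at hc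
    rw [← add_assoc, Real.sin_add_pi_div_two]
    exact lt_of_mul_lt_mul_left hc (norm_nonneg w)
  exact eq_of_abs_sin_lt_of_abs_sin_lt hM _ hab (hsin a ha) (hsin b hb)

theorem exists_mem_forall_sin_mul_norm_le_abs_re_exp_mul {ι : Type*} (P : Finset ι) (w : ι → ℂ)
    {M : ℕ} (hM : 0 < M) (L : Finset ℤ) (hL : ∀ a ∈ L, ∀ b ∈ L, |a - b| < M) (hPL : #P < #L) :
    ∃ ℓ ∈ L, ∀ i ∈ P,
      Real.sin (π / (2 * M)) * ‖w i‖ ≤ |(exp (I * ((π * ℓ / M : ℝ) : ℂ)) * w i).re| := by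
  classical
  set bad : ι → Finset ℤ := fun i => L.filter fun ℓ =>
    |(exp (I * ((π * ℓ / M : ℝ) : ℂ)) * w i).re| < Real.sin (π / (2 * M)) * ‖w i‖
  have hbad (i : ι) : #(bad i) ≤ 1 := by
    refine card_le_one.mpr fun a ha b hb => ?_
    obtain ⟨haL, ha⟩ := mem_filter.mp ha
    obtain ⟨hbL, hb⟩ := mem_filter.mp hb
    exact eq_of_abs_re_exp_mul_lt hM (w i) (hL a haL b hbL) ha hb
  have hcount : ∑ i ∈ P, #(bad i) < #L :=
    (card_eq_sum_ones P ▸ sum_le_sum fun i _ => hbad i).trans_lt hPL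
  obtain ⟨ℓ, hℓL, hℓ⟩ := exists_mem_forall_notMem_of_sum_card_lt P L bad hcount
  exact ⟨ℓ, hℓL, fun i hi => not_lt.mp fun h => hℓ i hi (mem_filter.mpr ⟨hℓL, h⟩)⟩

end Complex

theorem abs_pi_mul_div_lt_pi_div_four {M : ℕ} {ℓ : ℤ} (h : 4 * |ℓ| < M) :
    |π * ℓ / M| < π / 4 := by
  have h' : 4 * |(ℓ : ℝ)| < M := by exact_mod_cast h
  have hM : (0 : ℝ) < M := by linarith [abs_nonneg (ℓ : ℝ)]
  rw [abs_div, abs_mul, abs_of_pos pi_pos, Nat.abs_cast, div_lt_div_iff₀ hM four_pos]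
  nlinarith [pi_pos]

theorem adequate_angle_general (k : ℕ) (hk : 1 ≤ k) (x : Fin (k + 1) → ℂ) :
    ∃ ℓ : ℤ, |ℓ| ≤ 2 * ((2 : ℤ) ^ k - 1) - 1 ∧
      |Real.pi * (ℓ : ℝ) / (8 * ((2 : ℝ) ^ k - 1) + 1)| < Real.pi / 4 ∧
      ∀ I : Finset (Fin (k + 1)), I.Nonempty → I ≠ Finset.univ →
        Real.sin (Real.pi / (16 * ((2 : ℝ) ^ k - 1) + 2)) *
            ‖∑ j ∈ I, (∏ l ∈ Finset.univ.erase j, (x j - x l))⁻¹‖ ≤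
          |(Complex.exp (Complex.I *
              ((Real.pi * (ℓ : ℝ) / (8 * ((2 : ℝ) ^ k - 1) + 1) : ℝ) : ℂ)) *
            ∑ j ∈ I, (∏ l ∈ Finset.univ.erase j, (x j - x l))⁻¹).re| := by
  set K : ℕ := 2 ^ k - 1
  have hpow : 2 ≤ 2 ^ k := Nat.le_self_pow (by omega) 2
  have hKZ : (2 : ℤ) ^ k - 1 = K := by simp [K, Nat.cast_sub Nat.one_le_two_pow]
  have hKR : (2 : ℝ) ^ k - 1 = K := by simp [K, Nat.cast_sub Nat.one_le_two_pow]
  set M : ℕ := 8 * K + 1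
  have hMR : 8 * (K : ℝ) + 1 = M := by simp [M]
  have hδ : π / (16 * (K : ℝ) + 2) = π / (2 * M) := by rw [← hMR]; ring_nf
  rw [hKZ, hKR, hMR, hδ]
  set L : Finset ℤ := Icc (-(2 * K - 1)) (2 * K - 1)
  set P : Finset (Finset (Fin (k + 1))) := univ \ {∅, univ}
  have hL : ∀ a ∈ L, ∀ b ∈ L, |a - b| < M := fun a ha b hb => by
    rw [mem_Icc] at ha hb
    exact abs_sub_lt_iff.mpr ⟨by omega, by omega⟩
  have hPL : #P < #L := by
    rw [card_sdiff_empty_univ, Fintype.card_fin, Int.card_Icc, pow_succ]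
    omega
  obtain ⟨ℓ, hℓL, hℓ⟩ := Complex.exists_mem_forall_sin_mul_norm_le_abs_re_exp_mul P
    (fun I => ∑ j ∈ I, (∏ l ∈ univ.erase j, (x j - x l))⁻¹) (by omega) L hL hPL
  have hℓ' := mem_Icc.mp hℓL
  refine ⟨ℓ, abs_le.mpr hℓ', abs_pi_mul_div_lt_pi_div_four ?_, fun I hne hne' => ?_⟩
  · push_cast [M]
    rcases abs_cases ℓ with ⟨h, -⟩ | ⟨h, -⟩ <;> omega
  · exact hℓ I (by simp [P, hne.ne_empty, hne'])

/-- **Existence of an adequate (good) angle** (Lemma on `θ(ε)`).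
Let `k ≥ 1`, `K = 2^k − 1`, `δ = π/(16K+2)`, and let `x₀, …, x_k` be pairwise
distinct points of `ℂ`.  For a nonempty proper subset `I ⊊ {0,…,k}` put
`S_I = Σ_{j∈I} 1/∏_{l≠j}(x_j − x_l)`.  Then there is an integer `ℓ` with
`|ℓ| ≤ 2K − 1` such that `θ = πℓ/(8K+1)` lies in `(−π/4, π/4)` and for every
such `I` one has `|Re(e^{iθ} S_I)| ≥ sin(δ)·|S_I|`. -/
theorem adequate_angle (k : ℕ) (hk : 1 ≤ k) (x : Fin (k + 1) → ℂ)
    (hx : Function.Injective x) :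
    ∃ ℓ : ℤ, |ℓ| ≤ 2 * ((2 : ℤ) ^ k - 1) - 1 ∧
      |Real.pi * (ℓ : ℝ) / (8 * ((2 : ℝ) ^ k - 1) + 1)| < Real.pi / 4 ∧
      ∀ I : Finset (Fin (k + 1)), I.Nonempty → I ≠ Finset.univ →
        Real.sin (Real.pi / (16 * ((2 : ℝ) ^ k - 1) + 2)) *
            ‖∑ j ∈ I, (∏ l ∈ Finset.univ.erase j, (x j - x l))⁻¹‖ ≤
          |(Complex.exp (Complex.I *
              ((Real.pi * (ℓ : ℝ) / (8 * ((2 : ℝ) ^ k - 1) + 1) : ℝ) : ℂ)) *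
            ∑ j ∈ I, (∏ l ∈ Finset.univ.erase j, (x j - x l))⁻¹).re| :=
  adequate_angle_general k hk x
end

section
/- Let k ≥ 1, a ∈ ℂ, ε ∈ ℂ^k, and let r > 0 be such that every root of P_ε has modulus strictly less than r (for instance any r > √k·‖ε‖). Then (1/(2πi)) · ∮_{|z|=r} (1 + a·z^k)/P_ε(z) dz = a, where the integral is taken over the positively oriented circle of radius r centered at 0. In particular the formal invariant a is given by this contour integral and remains bounded when several roots of P_ε collide. -/
/-!
The integrand `f` is holomorphic outside the disc containing the roots, so its integral over
`|z| = R` does not depend on `R ≥ r`. Substituting `w = 1/z` shows `z f(z) → a` as `z → ∞`,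
so on a large circle `f(z)` is uniformly close to `a / z`, whose integral is `2πi a`, and the
error is at most `2πR · o(1)/R → 0`.
-/

open Complex Metric Filter Topology Bornology Real

section ResidueAtInfinity

variable {E : Type*} [NormedAddCommGroup E] [NormedSpace ℂ E]
  {f : ℂ → E} {c : ℂ} {r R δ : ℝ} {a : E}

theorem circleIntegral_eq_of_le_of_differentiableAt (hr : 0 < r) (hrR : r ≤ R)
    (hf : ∀ z, r ≤ ‖z - c‖ → DifferentiableAt ℂ f z) :
    (∮ z in C(c, R), f z) = ∮ z in C(c, r), f z := by
  refine circleIntegral_eq_of_differentiable_on_annulus_off_countable hr hrR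
    Set.countable_empty (fun z hz => ?_) fun z hz => hf z ?_
  · refine (hf z ?_).continuousAt.continuousWithinAt
    simpa [Complex.dist_eq] using hz.2
  · exact (not_le.1 (mt mem_closedBall_iff_norm.2 hz.1.2)).le

variable [CompleteSpace E]

theorem norm_circleIntegral_sub_two_pi_I_smul_le (hR : 0 < R) (hf : ContinuousOn f (sphere c R))
    (hδ : ∀ z ∈ sphere c R, ‖(z - c) • f z - a‖ ≤ δ) :
    ‖(∮ z in C(c, R), f z) - (2 * π * I) • a‖ ≤ 2 * π * δ := by
  have hsphere : ∀ z ∈ sphere c R, ‖z - c‖ = R := fun _ => mem_sphere_iff_norm.1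
  have hinv : ContinuousOn (fun z => (z - c)⁻¹ • a) (sphere c R) := fun z hz =>
    ((continuousAt_id.sub continuousAt_const).inv₀
      (norm_ne_zero_iff.1 ((hsphere z hz).trans_ne hR.ne'))).smul
      continuousAt_const |>.continuousWithinAt
  have h2piI : (∮ z in C(c, R), (z - c)⁻¹ • a) = (2 * π * I) • a := by
    rw [circleIntegral.integral_smul_const, circleIntegral.integral_sub_inv_of_mem_ball
      (mem_ball_self hR)]
  rw [← h2piI, ← circleIntegral.integral_sub (hf.circleIntegrable hR.le)
    (hinv.circleIntegrable hR.le)]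
  calc _ ≤ 2 * π * R * (R⁻¹ * δ) := circleIntegral.norm_integral_le_of_norm_le_const hR.le
          fun z hz => ?_
    _ = 2 * π * δ := by field_simp
  have hzc : z - c ≠ 0 := norm_ne_zero_iff.1 ((hsphere z hz).trans_ne hR.ne')
  rw [show f z - (z - c)⁻¹ • a = (z - c)⁻¹ • ((z - c) • f z - a) by
    rw [smul_sub, inv_smul_smul₀ hzc], norm_smul, norm_inv, hsphere z hz]
  exact mul_le_mul_of_nonneg_left (hδ z hz) (by positivity)

theorem circleIntegral_eq_two_pi_I_smul_of_tendsto_cobounded (hr : 0 < r)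
    (hf : ∀ z, r ≤ ‖z - c‖ → DifferentiableAt ℂ f z)
    (hlim : Tendsto (fun z => (z - c) • f z) (cobounded ℂ) (𝓝 a)) :
    (∮ z in C(c, r), f z) = (2 * π * I) • a := by
  refine eq_of_forall_dist_le fun δ hδ => ?_
  obtain ⟨M, -, hM⟩ := ((hasBasis_cobounded_compl_closedBall c).tendsto_iff
    nhds_basis_closedBall).1 hlim (δ / (2 * π)) (by positivity)
  set R := max r (M + 1)
  have hR : 0 < R := hr.trans_le (le_max_left _ _)
  rw [dist_eq_norm, ← circleIntegral_eq_of_le_of_differentiableAt hr (le_max_left r (M + 1)) hf]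
  calc _ ≤ 2 * π * (δ / (2 * π)) := norm_circleIntegral_sub_two_pi_I_smul_le hR ?_ ?_
    _ = δ := by field_simp
  · exact fun z hz =>
      (hf z (mem_sphere_iff_norm.1 hz ▸ le_max_left _ _)).continuousAt.continuousWithinAt
  · intro z hz
    have hMz : z ∉ closedBall c M := fun hzM => by
      rw [mem_closedBall, mem_sphere.1 hz] at hzM
      linarith [le_max_right r (M + 1)]
    simpa [dist_eq_norm] using hM z hMz

end ResidueAtInfinity

section FormalInvariant

variable {k : ℕ} (a : ℂ) (ε : Fin k → ℂ)

theorem pow_add_sum_eq_pow_mul_inv (z : ℂ) (hz : z ≠ 0) :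
    z ^ (k + 1) + ∑ j : Fin k, ε j * z ^ (j : ℕ) =
      z ^ (k + 1) * (1 + ∑ j : Fin k, ε j * z⁻¹ ^ (k + 1 - j)) := by
  rw [mul_add, mul_one, Finset.mul_sum]
  congr 1
  refine Finset.sum_congr rfl fun j _ => ?_
  rw [inv_pow, pow_sub₀ z hz (by omega : (j : ℕ) ≤ k + 1)]
  field_simp

theorem tendsto_mul_div_pow_add_sum (hk : 1 ≤ k) :
    Tendsto (fun z => z * ((1 + a * z ^ k) / (z ^ (k + 1) + ∑ j : Fin k, ε j * z ^ (j : ℕ))))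
      (cobounded ℂ) (𝓝 a) := by
  set g : ℂ → ℂ := fun w => (w ^ k + a) / (1 + ∑ j : Fin k, ε j * w ^ (k + 1 - j))
  have hden : 1 + ∑ j : Fin k, ε j * (0 : ℂ) ^ (k + 1 - j) = 1 := by
    rw [Finset.sum_eq_zero fun j _ => by rw [zero_pow (by omega), mul_zero], add_zero]
  have hg0 : g 0 = a := by simp [g, hden, zero_pow (by omega : k ≠ 0)]
  have hg : ContinuousAt g 0 := by
    refine ContinuousAt.div (by fun_prop) (by fun_prop) ?_
    simp [hden]
  have hlim := hg.tendsto.comp tendsto_inv₀_cobounded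
  rw [hg0] at hlim
  refine hlim.congr' ((eventually_ne_cobounded 0).mono fun z hz => ?_)
  simp only [Function.comp_apply, g]
  rw [pow_add_sum_eq_pow_mul_inv ε z hz, ← mul_div_assoc, ← div_div]
  congr 1
  rw [inv_pow]
  field_simp
  ring

end FormalInvariant

/-- **The formal invariant `a` as a contour integral.**
If every root of `P_ε(x) = x^{k+1} + ε_{k−1}x^{k−1} + ⋯ + ε₀` has modulus `< r`,
then `(1/(2πi)) ∮_{|z|=r} (1 + a z^k)/P_ε(z) dz = a`. -/
theorem formal_invariant_contour_integral (k : ℕ) (hk : 1 ≤ k) (a : ℂ)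
    (ε : Fin k → ℂ) (r : ℝ) (hr : 0 < r)
    (hroots : ∀ z : ℂ,
      z ^ (k + 1) + ∑ j : Fin k, ε j * z ^ (j : ℕ) = 0 → ‖z‖ < r) :
    (2 * (Real.pi : ℂ) * Complex.I)⁻¹ *
      (∮ z in C(0, r),
        (1 + a * z ^ k) / (z ^ (k + 1) + ∑ j : Fin k, ε j * z ^ (j : ℕ))) = a := by
  have hf : ∀ z : ℂ, r ≤ ‖z - 0‖ → DifferentiableAt ℂ
      (fun z => (1 + a * z ^ k) / (z ^ (k + 1) + ∑ j : Fin k, ε j * z ^ (j : ℕ))) z :=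
    fun z hz => by
      have hP := fun h => (hroots z h).not_ge (by simpa using hz)
      fun_prop (disch := exact hP)
  rw [circleIntegral_eq_two_pi_I_smul_of_tendsto_cobounded hr hf
    (by simpa using tendsto_mul_div_pow_add_sum a ε hk), smul_eq_mul,
    inv_mul_cancel_left₀ two_pi_I_ne_zero]
end

section
/- Let k ≥ 1, a ∈ ℂ, let Ω ⊆ ℂ × ℂ be open, let P : ℂ → ℂ, and let R, N : Ω → ℂ be holomorphic. Suppose that the cohomological equation P(x)·∂N/∂x(x,y) + y·(1 + a·x^k − R(x,y))·∂N/∂y(x,y) = R(x,y) holds for all (x,y) ∈ Ω (i.e. X·N = R for the vector field X(x,y) = (P(x), y·(1 + a·x^k − R(x,y)))). Define ψ : Ω → ℂ × ℂ by ψ(x,y) = (x, y·exp(N(x,y))). Then for every (x,y) ∈ Ω the derivative of ψ sends the vector X(x,y) to the model vector at the image point: Dψ(x,y)(X(x,y)) = (P(x), y·e^{N(x,y)}·(1 + a·x^k)) = X^M(ψ(x,y)), where X^M(x,y) = (P(x), y·(1 + a·x^k)). In other words, ψ — the time-N flow of Y = y ∂/∂y — is an (infinitesimal) conjugacy between X and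 the model X^M. -/
/-! The flow `ψ = Φ_Y^N` of `Y = y ∂/∂y` has derivative
`Dψ(p) v = (v₁, e^{N p} (v₂ + y · DN(p) v))`. For `v = X(p)`, whose second component is
`y (1 + a x^k − R)`, the cohomological equation `DN(p) X(p) = R(p)` cancels the `−R` term,
leaving `y e^{N} (1 + a x^k)`, the model field at `ψ(p)`. -/

open Complex

section YFlow

variable {E : Type*} [NormedAddCommGroup E] [NormedSpace ℂ E]

/-- The time-`N` flow of `y ∂/∂y`. -/
noncomputable def yFlow (N : E × ℂ → ℂ) (q : E × ℂ) : E × ℂ := (q.1, q.2 * exp (N q))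

theorem hasFDerivAt_yFlow {N : E × ℂ → ℂ} {N' : E × ℂ →L[ℂ] ℂ} {p : E × ℂ}
    (hN : HasFDerivAt N N' p) :
    HasFDerivAt (yFlow N)
      ((ContinuousLinearMap.fst ℂ E ℂ).prod
        (p.2 • (exp (N p) • N') + exp (N p) • ContinuousLinearMap.snd ℂ E ℂ)) p :=
  hasFDerivAt_fst.prodMk (hasFDerivAt_snd.mul hN.cexp)

theorem fderiv_yFlow_apply {N : E × ℂ → ℂ} {p : E × ℂ} (hN : DifferentiableAt ℂ N p)
    (v : E × ℂ) :
    fderiv ℂ (yFlow N) p v = (v.1, exp (N p) * (v.2 + p.2 * fderiv ℂ N p v)) := by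
  rw [(hasFDerivAt_yFlow hN.hasFDerivAt).fderiv]
  ext
  · rfl
  · simp only [ContinuousLinearMap.prod_apply, add_apply,
      smul_apply, ContinuousLinearMap.coe_snd', smul_eq_mul]
    ring

theorem fderiv_yFlow_apply_of_cohomological {N : E × ℂ → ℂ} {p : E × ℂ}
    (hN : DifferentiableAt ℂ N p) {u : E} {c r : ℂ}
    (hr : fderiv ℂ N p (u, p.2 * (c - r)) = r) :
    fderiv ℂ (yFlow N) p (u, p.2 * (c - r)) = (u, p.2 * exp (N p) * c) := by
  rw [fderiv_yFlow_apply hN, hr]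
  exact Prod.ext rfl (by simp only; ring)

end YFlow

theorem ContinuousLinearMap.apply_prod_eq_add {𝕜 : Type*} [NontriviallyNormedField 𝕜]
    (L : 𝕜 × 𝕜 →L[𝕜] 𝕜) (u w : 𝕜) : L (u, w) = u * L (1, 0) + w * L (0, 1) := by
  have : ((u, w) : 𝕜 × 𝕜) = u • (1, 0) + w • (0, 1) := by simp
  rw [this, map_add, map_smul, map_smul, smul_eq_mul, smul_eq_mul]

theorem flow_conjugates_to_model_general (k : ℕ) (a : ℂ)
    (Ω : Set (ℂ × ℂ)) (hΩ : IsOpen Ω) (P : ℂ → ℂ) (R N : ℂ × ℂ → ℂ)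
    (hN : DifferentiableOn ℂ N Ω)
    (heq : ∀ p ∈ Ω, P p.1 * fderiv ℂ N p (1, 0) +
      p.2 * (1 + a * p.1 ^ k - R p) * fderiv ℂ N p (0, 1) = R p)
    (ψ : ℂ × ℂ → ℂ × ℂ)
    (hψ : ∀ p : ℂ × ℂ, ψ p = (p.1, p.2 * Complex.exp (N p)))
    (X : ℂ × ℂ → ℂ × ℂ)
    (hX : ∀ p : ℂ × ℂ, X p = (P p.1, p.2 * (1 + a * p.1 ^ k - R p)))
    (XM : ℂ × ℂ → ℂ × ℂ)
    (hXM : ∀ p : ℂ × ℂ, XM p = (P p.1, p.2 * (1 + a * p.1 ^ k))) :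
    ∀ p ∈ Ω,
      fderiv ℂ ψ p (X p) = (P p.1, p.2 * Complex.exp (N p) * (1 + a * p.1 ^ k)) ∧
      fderiv ℂ ψ p (X p) = XM (ψ p) := by
  obtain rfl : ψ = yFlow N := funext hψ
  intro p hp
  have hNp : DifferentiableAt ℂ N p := hN.differentiableAt (hΩ.mem_nhds hp)
  have hcohom : fderiv ℂ N p (P p.1, p.2 * (1 + a * p.1 ^ k - R p)) = R p := by
    rw [ContinuousLinearMap.apply_prod_eq_add]
    exact heq p hp
  have hmodel := fderiv_yFlow_apply_of_cohomological hNp hcohom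
  rw [hX]
  exact ⟨hmodel, by rw [hmodel, hXM]; rfl⟩

/-- **The time-`N` flow of `y ∂/∂y` conjugates `X` to the model `X^M`.**
If `N` solves the cohomological equation
`P(x)·∂N/∂x + y(1 + a x^k − R)·∂N/∂y = R` on an open `Ω ⊆ ℂ²` (i.e. `X·N = R`
for `X(x,y) = (P(x), y(1 + a x^k − R(x,y)))`), then
`ψ(x,y) = (x, y·e^{N(x,y)})` satisfies
`Dψ(x,y)(X(x,y)) = (P(x), y·e^{N(x,y)}·(1 + a x^k)) = X^M(ψ(x,y))`,
where `X^M(x,y) = (P(x), y(1 + a x^k))`. -/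
theorem flow_conjugates_to_model (k : ℕ) (hk : 1 ≤ k) (a : ℂ)
    (Ω : Set (ℂ × ℂ)) (hΩ : IsOpen Ω) (P : ℂ → ℂ) (R N : ℂ × ℂ → ℂ)
    (hR : DifferentiableOn ℂ R Ω) (hN : DifferentiableOn ℂ N Ω)
    (heq : ∀ p ∈ Ω, P p.1 * fderiv ℂ N p (1, 0) +
      p.2 * (1 + a * p.1 ^ k - R p) * fderiv ℂ N p (0, 1) = R p)
    (ψ : ℂ × ℂ → ℂ × ℂ)
    (hψ : ∀ p : ℂ × ℂ, ψ p = (p.1, p.2 * Complex.exp (N p)))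
    (X : ℂ × ℂ → ℂ × ℂ)
    (hX : ∀ p : ℂ × ℂ, X p = (P p.1, p.2 * (1 + a * p.1 ^ k - R p)))
    (XM : ℂ × ℂ → ℂ × ℂ)
    (hXM : ∀ p : ℂ × ℂ, XM p = (P p.1, p.2 * (1 + a * p.1 ^ k))) :
    ∀ p ∈ Ω,
      fderiv ℂ ψ p (X p) = (P p.1, p.2 * Complex.exp (N p) * (1 + a * p.1 ^ k)) ∧
      fderiv ℂ ψ p (X p) = XM (ψ p) :=
  flow_conjugates_to_model_general k a Ω hΩ P R N hN heq ψ hψ X hX XM hXM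
end
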